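/- An element y of a complete lattice L is a splitting (i.e., there is an x such that (x,y) is a splitting pair) if and only if y is completely join-prime: for every family {zᵢ}, y ≤ ⋁ᵢ zᵢ implies y ≤ zᵢ for some i. -/

import Mathlib

/-! A splitting pair `(x, y)` cuts `L` into the down-set of `x` and the up-set of `y`, so `x` is
the join of everything not above `y`. Hence `y` is a splitting exactly when that join is not
above `y`, which is what complete join-primality of `y` says. -/

/-- `(x, y)` is a splitting pair: for every `z`, exactly one of `z ≤ x`, `y ≤ z` holds. -/
def IsSplittingPair {L : Type*} [CompleteLattice L] (x y : L) : Prop :=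
  ∀ z : L, Xor' (z ≤ x) (y ≤ z)

namespace IsSplittingPair

variable {L : Type*} [CompleteLattice L] {x y : L}

theorem le_iff_not_le (h : IsSplittingPair x y) (z : L) : z ≤ x ↔ ¬y ≤ z :=
  xor_iff_iff_not.mp (h z)

theorem not_le (h : IsSplittingPair x y) : ¬y ≤ x :=
  (h.le_iff_not_le x).mp le_rfl

theorem exists_le_of_le_sSup (h : IsSplittingPair x y) {S : Set L} (hS : y ≤ sSup S) :
    ∃ z ∈ S, y ≤ z := by
  by_contra! hS'
  have hSx : sSup S ≤ x := sSup_le fun z hz => (h.le_iff_not_le z).mpr (hS' z hz)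
  exact h.not_le (hS.trans hSx)

end IsSplittingPair

theorem isSplittingPair_sSup_not_le {L : Type*} [CompleteLattice L] {y : L}
    (hy : ∀ S : Set L, y ≤ sSup S → ∃ z ∈ S, y ≤ z) :
    IsSplittingPair (sSup {z | ¬y ≤ z}) y := by
  refine fun z => xor_iff_iff_not.mpr ⟨fun hz hyz => ?_, fun hyz => le_sSup hyz⟩
  obtain ⟨w, hw, hyw⟩ := hy _ (hyz.trans hz)
  exact hw hyw

/-- `y` is a splitting of a complete lattice iff `y` is completely join-prime. -/
theorem stmt8 {L : Type*} [CompleteLattice L] (y : L) :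
    (∃ x : L, IsSplittingPair x y) ↔
      (∀ S : Set L, y ≤ sSup S → ∃ z ∈ S, y ≤ z) :=
  ⟨fun ⟨_, h⟩ _ => h.exists_le_of_le_sSup, fun hy => ⟨_, isSplittingPair_sSup_not_le hy⟩⟩
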